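/- arXiv:1408.2851 — 10 statements merged into one kernel-verified Lean document; each statement's English description precedes it below -/
import Mathlib

section
/- Assume the continuum hypothesis (2^ℵ₀ = ℵ₁). Then property (*) holds: there exists a sequence of functions (φₙ : ω₁ → ω₁)ₙ∈ℕ such that for every subset I of ω₁ of cardinality ℵ₁ there exists n ∈ ℕ with φₙ '' I = ω₁ (i.e., φₙ restricted to I is onto ω₁). -/
open Cardinal Set

/-- ω₁, the first uncountable ordinal, viewed as the set of all countable ordinals. -/
abbrev Omega1 := {o : Ordinal.{0} // o < (Cardinal.aleph 1).ord}

/-!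
Under CH there are only `ℵ₁` sequences `ℕ → ω₁`; enumerate them as `(f_α)_{α < ω₁}` and, for each
`β`, enumerate the countable set `{α ≤ β}` as `(k_β n)_n`. Put `φ n β := f_{k_β n} n`. If no `φ n`
maps `I` onto `ω₁`, pick `γ n ∉ φ n '' I` and let `γ = f_α`. Every `β ∈ I` with `α ≤ β` has
`α = k_β n` for some `n`, whence `φ n β = γ n`; so `I ⊆ [0, α]` is countable.
-/

universe u v

theorem exists_seq_image_eq_univ_of_not_bddAbove {X Y : Type*} [LinearOrder X]
    (hX : ∀ β : X, (Set.Iic β).Countable) {e : X → ℕ → Y} (he : e.Surjective) :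
    ∃ φ : ℕ → X → Y, ∀ I : Set X, ¬ BddAbove I → ∃ n, φ n '' I = Set.univ := by
  choose k hk using fun β : X => (hX β).exists_surjective nonempty_Iic
  refine ⟨fun n β => e (k β n) n, fun I hI => ?_⟩
  by_contra! hφ
  choose γ hγ using fun n => (ne_univ_iff_exists_notMem _).mp (hφ n)
  obtain ⟨α, rfl⟩ := he γ
  refine hI ⟨α, fun β hβ => le_of_not_ge fun hαβ => ?_⟩
  obtain ⟨n, hn⟩ := hk β ⟨α, mem_Iic.mpr hαβ⟩
  exact hγ n ⟨β, hβ, by simp [hn]⟩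

theorem continuum_eq_aleph_one_lift (h : continuum.{u} = ℵ₁) : continuum.{v} = ℵ₁ := by
  apply lift_injective.{u}
  simpa using congrArg lift.{v} h

namespace Omega1

theorem mk_eq : #Omega1 = ℵ₁ := by
  have h := mk_Iio_ordinal (ord ℵ₁ : Ordinal.{0})
  rwa [card_ord, lift_aleph, Ordinal.lift_one] at h

theorem countable_Iic (β : Omega1) : (Set.Iic β).Countable := by
  have hsucc : Order.succ β.1 < ord ℵ₁ :=
    (isSuccLimit_ord (aleph0_le_aleph 1)).succ_lt β.2
  have hIio : (Set.Iio (Order.succ β.1)).Countable := by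
    rw [← le_aleph0_iff_set_countable, mk_Iio_ordinal, lift_le_aleph0, ← lt_aleph_one_iff]
    exact lt_ord.mp hsucc
  refine countable_of_injective_of_countable_image Subtype.val_injective.injOn (hIio.mono ?_)
  rintro _ ⟨α, hα, rfl⟩
  exact Order.lt_succ_of_le (show α.1 ≤ β.1 from hα)

theorem mk_nat_arrow (hCH : continuum.{u} = ℵ₁) : #(ℕ → Omega1) = #Omega1 := by
  rw [mk_arrow, mk_eq, lift_aleph, Ordinal.lift_one, mk_nat, lift_aleph0,
    ← continuum_eq_aleph_one_lift hCH, continuum_power_aleph0]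

theorem not_bddAbove_of_mk_eq {I : Set Omega1} (hI : #I = ℵ₁) : ¬ BddAbove I := by
  rintro ⟨α, hα⟩
  have hIc := le_aleph0_iff_set_countable.mpr ((countable_Iic α).mono hα)
  rw [hI] at hIc
  exact (aleph0_lt_aleph_one.trans_le hIc).false

end Omega1

/-- CH implies property (*): there is a sequence (φₙ : ω₁ → ω₁) such that every
subset of ω₁ of cardinality ℵ₁ is mapped onto ω₁ by some φₙ. -/
theorem ch_implies_star
    (hCH : (2 : Cardinal) ^ Cardinal.aleph0 = Cardinal.aleph 1) :
    ∃ φ : ℕ → Omega1 → Omega1,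
      ∀ I : Set Omega1, #I = Cardinal.aleph 1 →
        ∃ n : ℕ, φ n '' I = Set.univ := by
  obtain ⟨e⟩ := Cardinal.eq.mp (Omega1.mk_nat_arrow (two_power_aleph0 ▸ hCH)).symm
  obtain ⟨φ, hφ⟩ :=
    exists_seq_image_eq_univ_of_not_bddAbove Omega1.countable_Iic e.surjective
  exact ⟨φ, fun I hI => hφ I (Omega1.not_bddAbove_of_mk_eq hI)⟩
end

section
/- Property (**) implies property (*): if there exists a family (g_α : ℕ → ω₁)_{α<ω₁} such that for every g : ℕ → ω₁, for all but countably many α < ω₁ there are infinitely many n with g(n) = g_α(n), then there exists a sequence (φₙ : ω₁ → ω₁)ₙ∈ℕ such that for every subset I of ω₁ of cardinality ℵ₁ there exists n with φₙ '' I = ω₁. -/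
open Cardinal Set

/-- Property (**) implies property (*). -/
theorem star2_implies_star
    (h : ∃ g : Omega1 → ℕ → Omega1,
      ∀ k : ℕ → Omega1, {α : Omega1 | {n : ℕ | k n = g α n}.Finite}.Countable) :
    ∃ φ : ℕ → Omega1 → Omega1,
      ∀ I : Set Omega1, #I = Cardinal.aleph 1 →
        ∃ n : ℕ, φ n '' I = Set.univ := by
  obtain ⟨g, hg⟩ := h
  refine ⟨fun n α => g α n, ?_⟩
  intro I hI
  by_contra hcon
  push_neg at hcon
  have hch : ∀ n, ∃ β : Omega1, ∀ α ∈ I, g α n ≠ β := by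
    intro n
    rcases (Set.ne_univ_iff_exists_notMem _).1 (hcon n) with ⟨β, hβ⟩
    exact ⟨β, fun α hα hne => hβ ⟨α, hα, hne⟩⟩
  choose k hk using hch
  have hsub : I ⊆ {α | {n | k n = g α n}.Finite} := by
    intro α hα
    have : {n | k n = g α n} = ∅ := by
      ext n
      simp only [mem_setOf_eq, mem_empty_iff_false, iff_false]
      exact fun he => hk n α hα he.symm
    simp [this]
  have hcnt : I.Countable := (hg k).mono hsub
  have hle : #I ≤ ℵ₀ := hcnt.le_aleph0
  rw [hI] at hle
  exact absurd hle (aleph0_lt_aleph_one).not_ge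
end

section
/- Property (*) implies property (**): if there exists a sequence (φₙ : ω₁ → ω₁)ₙ∈ℕ such that for every subset I of ω₁ of cardinality ℵ₁ there exists n with φₙ '' I = ω₁, then there exists a family (g_α : ℕ → ω₁)_{α<ω₁} such that for every g : ℕ → ω₁, for all but countably many α < ω₁ there are infinitely many n with g(n) = g_α(n). (Indeed, g_α(n) := φₙ(α) works.) -/
/-!
Take `g α n := φ n α`. If uncountably many `α` agreed with some `k` only finitely often, then,
since there are only countably many finite subsets of `ℕ`, uncountably many of them would have
the same agreement set `T`. By (*) some `φ n` maps this uncountable set `A` onto `ω₁`, which is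
impossible: for `n ∈ T` the map `φ n` is constantly `k n` on `A`, and for `n ∉ T` it misses `k n`.
-/

open Cardinal Set

section

variable {α β : Type*}

theorem image_ne_univ_of_forall_setOf_eq [Nontrivial β] {φ : ℕ → α → β} {k : ℕ → β} {A : Set α}
    {T : Set ℕ} (hA : ∀ a ∈ A, {n | k n = φ n a} = T) (n : ℕ) : φ n '' A ≠ Set.univ := by
  intro hsurj
  by_cases hn : n ∈ T
  · obtain ⟨b, hb⟩ := exists_ne (k n)
    obtain ⟨a, ha, rfl⟩ := hsurj ▸ mem_univ b
    have hagree : n ∈ {m | k m = φ m a} := (hA a ha).symm ▸ hn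
    exact hb hagree.symm
  · obtain ⟨a, ha, hak⟩ := hsurj ▸ mem_univ (k n)
    have hagree : n ∈ {m | k m = φ m a} := hak.symm
    exact hn (hA a ha ▸ hagree)

theorem exists_not_countable_setOf_eq_of_finite {f : α → Set ℕ}
    (hB : ¬ {a | (f a).Finite}.Countable) : ∃ T : Set ℕ, ¬ {a | f a = T}.Countable := by
  by_contra! hfibres
  refine hB (((countable_ofPred_finite_subset countable_univ).biUnion
    fun T _ => hfibres T).mono ?_)
  intro a ha
  exact mem_biUnion (x := f a) ⟨ha, subset_univ _⟩ rfl

theorem countable_setOf_finite_setOf_eq [Nontrivial β] {φ : ℕ → α → β}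
    (hφ : ∀ I : Set α, ¬ I.Countable → ∃ n, φ n '' I = Set.univ) (k : ℕ → β) :
    {a | {n | k n = φ n a}.Finite}.Countable := by
  by_contra hB
  obtain ⟨T, hT⟩ := exists_not_countable_setOf_eq_of_finite hB
  obtain ⟨n, hn⟩ := hφ _ hT
  exact image_ne_univ_of_forall_setOf_eq (fun a ha => ha) n hn

theorem mk_set_eq_aleph_one_of_not_countable (hα : #α = ℵ₁) {I : Set α} (hI : ¬ I.Countable) :
    #I = ℵ₁ :=
  le_antisymm (hα ▸ mk_set_le I)
    (aleph_one_le_iff.2 (lt_of_not_ge (mt le_aleph0_iff_set_countable.1 hI)))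

end

theorem mk_omega1 : #Omega1 = ℵ₁ := by
  have h := mk_Iio_ordinal (ℵ₁ : Cardinal.{0}).ord
  rwa [card_ord, lift_aleph, Ordinal.lift_one] at h

instance : Nontrivial Omega1 :=
  one_lt_iff_nontrivial.1 (mk_omega1 ▸ one_lt_aleph0.trans aleph0_lt_aleph_one)

/-- Property (*) implies property (**); indeed g_α(n) := φₙ(α) works. -/
theorem star_implies_star2
    (φ : ℕ → Omega1 → Omega1)
    (hφ : ∀ I : Set Omega1, #I = Cardinal.aleph 1 →
      ∃ n : ℕ, φ n '' I = Set.univ) :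
    ∃ g : Omega1 → ℕ → Omega1,
      (∀ α n, g α n = φ n α) ∧
      ∀ k : ℕ → Omega1, {α : Omega1 | {n : ℕ | k n = g α n}.Finite}.Countable :=
  ⟨fun α n => φ n α, fun _ _ => rfl, countable_setOf_finite_setOf_eq
    fun I hI => hφ I (mk_set_eq_aleph_one_of_not_countable mk_omega1 hI)⟩
end

section
/- Suppose the sequence (φₙ : ω₁ → ω₁)ₙ∈ℕ witnesses property (*), i.e., for every subset I of ω₁ of cardinality ℵ₁ there exists n with φₙ '' I = ω₁. Then in fact for every subset I of ω₁ of cardinality ℵ₁, the set {n ∈ ℕ : φₙ '' I = ω₁} is infinite. -/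
open Cardinal Set

/-- Omega1 has two distinct elements. -/
lemma omega1_nontrivial : ∃ y z : Omega1, y ≠ z := by
  have h0 : (0 : Ordinal.{0}) < (Cardinal.aleph 1).ord := by
    rw [pos_iff_ne_zero]
    intro h
    exact (Cardinal.aleph_pos 1).ne' (Cardinal.ord_eq_zero.mp h)
  have h1 : (1 : Ordinal.{0}) < (Cardinal.aleph 1).ord := by
    have : Ordinal.omega0 ≤ (Cardinal.aleph 1).ord := by
      rw [← Cardinal.ord_aleph0]
      exact Cardinal.ord_le_ord.mpr (Cardinal.aleph0_le_aleph 1)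
    exact lt_of_lt_of_le Ordinal.one_lt_omega0 this
  exact ⟨⟨0, h0⟩, ⟨1, h1⟩, by simp⟩

/-- Single shrinking step. -/
lemma shrink_step (f : Omega1 → Omega1) (J : Set Omega1) (hJ : #J = Cardinal.aleph 1) :
    ∃ J' ⊆ J, #J' = Cardinal.aleph 1 ∧ f '' J' ≠ Set.univ := by
  obtain ⟨y, z, hyz⟩ := omega1_nontrivial
  set F : Set Omega1 := J ∩ f ⁻¹' {y} with hF
  have hcover : J ⊆ (J \ F) ∪ F := fun x hx => by
    by_cases h : x ∈ F
    · exact Or.inr h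
    · exact Or.inl ⟨hx, h⟩
  have hsum : #J ≤ #(J \ F : Set Omega1) + #F :=
    le_trans (Cardinal.mk_le_mk_of_subset hcover) (Cardinal.mk_union_le _ _)
  have hbig : #(J \ F : Set Omega1) = Cardinal.aleph 1 ∨ #F = Cardinal.aleph 1 := by
    by_contra hcon
    push_neg at hcon
    obtain ⟨h1, h2⟩ := hcon
    have l1 : #(J \ F : Set Omega1) < Cardinal.aleph 1 :=
      lt_of_le_of_ne (hJ ▸ Cardinal.mk_le_mk_of_subset (Set.diff_subset)) h1
    have l2 : #F < Cardinal.aleph 1 :=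
      lt_of_le_of_ne (hJ ▸ Cardinal.mk_le_mk_of_subset (Set.inter_subset_left)) h2
    have := Cardinal.add_lt_of_lt (Cardinal.aleph0_le_aleph 1) l1 l2
    exact absurd (hJ ▸ hsum) (not_le.mpr this)
  rcases hbig with h | h
  · refine ⟨J \ F, Set.diff_subset, h, ?_⟩
    intro heq
    have : y ∈ f '' (J \ F) := heq ▸ Set.mem_univ y
    obtain ⟨x, hx, hfx⟩ := this
    exact hx.2 ⟨hx.1, by simp [hfx]⟩
  · refine ⟨F, Set.inter_subset_left, h, ?_⟩
    intro heq
    have : z ∈ f '' F := heq ▸ Set.mem_univ z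
    obtain ⟨x, hx, hfx⟩ := this
    have : f x = y := hx.2
    exact hyz (by rw [← hfx, this])

lemma shrink_finset (φ : ℕ → Omega1 → Omega1) (I : Set Omega1)
    (hI : #I = Cardinal.aleph 1) (T : Finset ℕ) :
    ∃ J ⊆ I, #J = Cardinal.aleph 1 ∧ ∀ n ∈ T, φ n '' J ≠ Set.univ := by
  induction T using Finset.induction with
  | empty => exact ⟨I, subset_rfl, hI, by simp⟩
  | @insert a s hnotmem ih =>
    obtain ⟨J, hJI, hJ, hJT⟩ := ih
    obtain ⟨J', hJ'J, hJ', hJ'ne⟩ := shrink_step (φ a) J hJ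
    refine ⟨J', hJ'J.trans hJI, hJ', ?_⟩
    intro n hn
    rcases Finset.mem_insert.mp hn with rfl | hn
    · exact hJ'ne
    · intro heq
      apply hJT n hn
      apply Set.eq_univ_of_univ_subset
      rw [← heq]
      exact Set.image_mono hJ'J

/-- If (φₙ) witnesses (*), then for every subset I of ω₁ of cardinality ℵ₁
there are in fact infinitely many n with φₙ '' I = ω₁. -/
theorem star_witness_infinitely_often
    (φ : ℕ → Omega1 → Omega1)
    (hφ : ∀ I : Set Omega1, #I = Cardinal.aleph 1 →
      ∃ n : ℕ, φ n '' I = Set.univ) :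
    ∀ I : Set Omega1, #I = Cardinal.aleph 1 →
      {n : ℕ | φ n '' I = Set.univ}.Infinite := by
  intro I hI
  by_contra hninf
  rw [Set.not_infinite] at hninf
  have hfin := hninf
  obtain ⟨J, hJI, hJ, hJT⟩ := shrink_finset φ I hI hfin.toFinset
  obtain ⟨n, hn⟩ := hφ J hJ
  have hnI : φ n '' I = Set.univ := by
    apply Set.eq_univ_of_univ_subset
    rw [← hn]
    exact Set.image_mono hJI
  exact hJT n (hfin.mem_toFinset.mpr hnI) hn
end

section
/- Property (**) implies the existence of an (S**)-family: if there exists (g_α : ℕ → ω₁)_{α<ω₁} such that for every g : ℕ → ω₁, for all but countably many α there are infinitely many n with g(n) = g_α(n), then there exists a family (h_α : ℕ → ω₁)_{α<ω₁} such that for every infinite set X ⊆ ℕ and every function h : X → ω₁, for all but countably many α < ω₁ there are infinitely many n ∈ X with h(n) = h_α(n). -/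
open Cardinal Set

/-!
Code every finite partial function `ℕ → κ` (a finite set of pairs) by an element of `κ`, and read
`g α j` as such a code. For an infinite `X = {x₀ < x₁ < ⋯}` and `k`, let `k' j` code the graph of
`k` on `{x₀, …, x_j}`; at each of the infinitely many `j` where `g α j = k' j`, the decoded set
has `j + 1` distinct first coordinates, so a greedy choice can commit `h α` to agree with it at a
point of `X` not used at an earlier stage. Hence `h α` agrees with `k` at infinitely many points
of `X` whenever `g α` agrees with `k'` infinitely often.
-/

noncomputable section

section GreedyTransversal

variable {γ ι : Type*} [Nonempty γ] [DecidableEq ι] (π : γ → ι) (A : ℕ → Finset γ)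

open Classical in
def freshPick (U : Finset ι) (s : Finset γ) : γ :=
  if h : ∃ p ∈ s, π p ∉ U then h.choose else Classical.arbitrary γ

def usedImages : ℕ → Finset ι
  | 0 => ∅
  | j + 1 => insert (π (freshPick π (usedImages j) (A j))) (usedImages j)

def greedyPick (j : ℕ) : γ :=
  freshPick π (usedImages π A j) (A j)

theorem card_usedImages_le (j : ℕ) : (usedImages π A j).card ≤ j := by
  induction j with
  | zero => simp [usedImages]
  | succ j ih => exact (Finset.card_insert_le _ _).trans (Nat.succ_le_succ ih)

theorem greedyPick_mem_usedImages {i j : ℕ} (hij : i < j) :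
    π (greedyPick π A i) ∈ usedImages π A j := by
  induction j, hij using Nat.le_induction with
  | base => exact Finset.mem_insert_self _ _
  | succ j _ ih => exact Finset.mem_insert_of_mem ih

theorem greedyPick_spec {j : ℕ} (hj : j < ((A j).image π).card) :
    greedyPick π A j ∈ A j ∧ π (greedyPick π A j) ∉ usedImages π A j := by
  have hfresh : ∃ p ∈ A j, π p ∉ usedImages π A j := by
    by_contra! hall
    have hsub : (A j).image π ⊆ usedImages π A j := by
      simpa [Finset.image_subset_iff] using hall
    have := (Finset.card_le_card hsub).trans (card_usedImages_le π A j)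
    omega
  rw [greedyPick, freshPick, dif_pos hfresh]
  exact hfresh.choose_spec

theorem injOn_greedyPick :
    InjOn (π ∘ greedyPick π A) {j | j < ((A j).image π).card} := by
  have key : ∀ i j, i < j → j < ((A j).image π).card →
      π (greedyPick π A i) ≠ π (greedyPick π A j) := fun i j hij hj heq =>
    (greedyPick_spec π A hj).2 (heq ▸ greedyPick_mem_usedImages π A hij)
  intro i hi j hj heq
  rcases lt_trichotomy i j with hij | rfl | hji
  · exact absurd heq (key i j hij hj)
  · rfl
  · exact absurd heq.symm (key j i hji hi)

end GreedyTransversal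

theorem exists_fun_graph_meets_infinitely_many {ι β : Type*} [Nonempty (ι × β)] [DecidableEq ι]
    (ℓ : ℕ → Finset (ι × β)) :
    ∃ f : ι → β, ∀ S : Set ℕ, S.Infinite → (∀ j ∈ S, j < ((ℓ j).image Prod.fst).card) →
      {a | ∃ j ∈ S, (a, f a) ∈ ℓ j}.Infinite := by
  set G := {j | j < ((ℓ j).image Prod.fst).card}
  set σ := greedyPick Prod.fst ℓ
  have hinj : InjOn (Prod.fst ∘ σ) G := injOn_greedyPick Prod.fst ℓ
  refine ⟨fun a => (σ (Function.invFunOn (Prod.fst ∘ σ) G a)).2, fun S hS hSG => ?_⟩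
  refine ((hS.image (hinj.mono hSG))).mono ?_
  rintro _ ⟨j, hj, rfl⟩
  refine ⟨j, hj, ?_⟩
  beta_reduce
  rw [hinj.leftInvOn_invFunOn (hSG j hj)]
  exact (greedyPick_spec Prod.fst ℓ (hSG j hj)).1

def finsetCode (κ : Type*) [Infinite κ] : Finset (ℕ × κ) ≃ κ :=
  Classical.choice <| Cardinal.eq.1 <| by
    rw [mk_finset_of_infinite, mk_prod, mk_nat, lift_aleph0, lift_uzero,
      mul_eq_right (aleph0_le_mk κ) (aleph0_le_mk κ) aleph0_ne_zero]

theorem exists_family_finite_agreement_subset {I κ : Type*} [Infinite κ] (g : I → ℕ → κ) :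
    ∃ h : I → ℕ → κ, ∀ X : Set ℕ, X.Infinite → ∀ k : ℕ → κ, ∃ k' : ℕ → κ,
      {α | {n ∈ X | k n = h α n}.Finite} ⊆ {α | {n | k' n = g α n}.Finite} := by
  classical
  set e := finsetCode κ
  choose h hh using fun α => exists_fun_graph_meets_infinitely_many fun j => e.symm (g α j)
  refine ⟨h, fun X hX k => ?_⟩
  set x := Nat.nth (· ∈ X)
  have hxinj : Function.Injective x := Nat.nth_injective hX
  set graph : ℕ → Finset (ℕ × κ) := fun j =>
    (Finset.range (j + 1)).image fun i => (x i, k (x i))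
  have card_graph (j : ℕ) : j < ((graph j).image Prod.fst).card := by
    rw [Finset.image_image]
    simp [Function.comp_def, Finset.card_image_of_injective _ hxinj]
  have mem_graph {j a b} (hab : (a, b) ∈ graph j) : a ∈ X ∧ k a = b := by
    obtain ⟨i, -, hi⟩ := Finset.mem_image.1 hab
    cases hi
    exact ⟨Nat.nth_mem_of_infinite hX i, rfl⟩
  refine ⟨fun j => e (graph j), fun α hα => ?_⟩
  by_contra hS
  refine ((hh α _ hS fun j hj => ?_).mono ?_) hα
  · rw [← Set.mem_ofPred.1 hj, e.symm_apply_apply]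
    exact card_graph j
  · rintro a ⟨j, hj, hja⟩
    rw [← Set.mem_ofPred.1 hj, e.symm_apply_apply] at hja
    exact mem_graph hja

end

instance : Infinite Omega1 := infinite_iff.2 <| by
  change ℵ₀ ≤ #(Iio (aleph 1).ord)
  rw [mk_Iio_ordinal, card_ord, ← lift_aleph0.{1, 0}, lift_le]
  exact aleph0_le_aleph 1

/-- Property (**) implies the existence of an (S**)-family. -/
theorem star2_implies_Sstar2
    (h : ∃ g : Omega1 → ℕ → Omega1,
      ∀ k : ℕ → Omega1, {α : Omega1 | {n : ℕ | k n = g α n}.Finite}.Countable) :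
    ∃ hfam : Omega1 → ℕ → Omega1,
      ∀ X : Set ℕ, X.Infinite → ∀ k : ℕ → Omega1,
        {α : Omega1 | {n ∈ X | k n = hfam α n}.Finite}.Countable := by
  obtain ⟨g, hg⟩ := h
  obtain ⟨hfam, hfam_spec⟩ := exists_family_finite_agreement_subset g
  refine ⟨hfam, fun X hX k => ?_⟩
  obtain ⟨k', hk'⟩ := hfam_spec X hX k
  exact (hg k').mono hk'
end

section
/- The existence of an (S**)-family implies property (S*): if there exists (h_α : ℕ → ω₁)_{α<ω₁} such that for every infinite X ⊆ ℕ and every h : X → ω₁, for all but countably many α there are infinitely many n ∈ X with h(n) = h_α(n), then the functions φₙ(α) := h_α(n) witness (S*); that is, for every subset I of ω₁ of cardinality ℵ₁, φₙ '' I = ω₁ for all but finitely many n. -/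
open Cardinal Set

instance : Nonempty Omega1 :=
  ⟨⟨0, by rw [Cardinal.lt_ord]; simp [Cardinal.aleph_pos]⟩⟩

/-- An (S**)-family yields a witness to (S*) via φₙ(α) := h_α(n). -/
theorem Sstar2_implies_Sstar
    (h : Omega1 → ℕ → Omega1)
    (hh : ∀ X : Set ℕ, X.Infinite → ∀ k : ℕ → Omega1,
      {α : Omega1 | {n ∈ X | k n = h α n}.Finite}.Countable) :
    ∀ I : Set Omega1, #I = Cardinal.aleph 1 →
      {n : ℕ | (fun α => h α n) '' I ≠ Set.univ}.Finite := by
  intro I hI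
  by_contra hfin
  set X : Set ℕ := {n : ℕ | (fun α => h α n) '' I ≠ Set.univ} with hX
  have hXinf : X.Infinite := hfin
  -- choose for each n ∈ X an element not in the image
  have hchoice : ∀ n : ℕ, ∃ b : Omega1, n ∈ X → b ∉ (fun α => h α n) '' I := by
    intro n
    by_cases hn : n ∈ X
    · have : ∃ b, b ∉ (fun α => h α n) '' I := by
        by_contra hc
        push_neg at hc
        exact hn (Set.eq_univ_of_forall hc)
      obtain ⟨b, hb⟩ := this
      exact ⟨b, fun _ => hb⟩
    · exact ⟨Classical.arbitrary _, fun hn' => absurd hn' hn⟩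
  choose k hk using hchoice
  have hC := hh X hXinf k
  -- I is not a subset of the countable set
  have : ∃ α ∈ I, ¬ ({n ∈ X | k n = h α n}.Finite) := by
    by_contra hc
    push_neg at hc
    have hsub : I ⊆ {α : Omega1 | {n ∈ X | k n = h α n}.Finite} := fun α hα => hc α hα
    have : #I ≤ ℵ₀ := le_trans (Cardinal.mk_le_mk_of_subset hsub)
      (Cardinal.mk_le_aleph0_iff.mpr hC)
    rw [hI] at this
    exact absurd this (by simp [Cardinal.aleph0_lt_aleph_one.not_ge])
  obtain ⟨α, hαI, hαinf⟩ := this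
  have hne : {n ∈ X | k n = h α n}.Nonempty := by
    rcases Set.eq_empty_or_nonempty {n ∈ X | k n = h α n} with he | hne
    · exact absurd (he ▸ Set.finite_empty) hαinf
    · exact hne
  obtain ⟨n, hnX, hkn⟩ := hne
  exact hk n hnX ⟨α, hαI, hkn.symm⟩
end

section
/- There exists a coherent sequence of one-to-one functions on the countable infinite ordinals: for every ordinal α with ω ≤ α < ω₁ there is an injective function f_α : α → ℕ (i.e., f_α is defined on the set of ordinals below α) such that for all ω ≤ α < β < ω₁, f_β(γ) = f_α(γ) for all but finitely many γ < α. -/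
/-!
Construct `f α` by recursion on `α < ω₁`, keeping `f α` injective on `α` with co-infinite range
and coherent with every earlier `f β`. At a successor `β + 1`, send `β` to a value outside the
range of `f β`. At a limit `α`, fix a cofinal sequence `αₙ` and build `f α` on `αₙ` step by step:
extend the previous approximation by `f αₙ₊₁`, redirecting to fresh values the finitely many
points whose `f αₙ₊₁`-value is already taken (finitely many by coherence and injectivity of
`f αₙ₊₁`). Co-infinite ranges supply the fresh values, and reserving one more value at each step
keeps the range of `f α` co-infinite.
-/

open Set Filter

variable {X Y : Type*}

namespace Filter

theorem eventuallyEq_cofinite_inf_principal_iff {s : Set X} {f g : X → Y} :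
    f =ᶠ[cofinite ⊓ 𝓟 s] g ↔ {x | x ∈ s ∧ f x ≠ g x}.Finite := by
  simp only [EventuallyEq, eventually_inf_principal, eventually_cofinite, Classical.not_imp]

theorem EventuallyEq.finite_image_sdiff_image {s : Set X} {f g : X → Y}
    (hfg : f =ᶠ[cofinite ⊓ 𝓟 s] g) : (f '' s \ g '' s).Finite := by
  refine ((eventuallyEq_cofinite_inf_principal_iff.1 hfg).image f).subset ?_
  rintro _ ⟨⟨x, hx, rfl⟩, hxg⟩
  exact ⟨x, ⟨hx, fun h => hxg ⟨x, hx, h.symm⟩⟩, rfl⟩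

theorem EventuallyEq.infinite_compl_image {s : Set X} {f g : X → Y}
    (hfg : f =ᶠ[cofinite ⊓ 𝓟 s] g) (hg : (g '' s)ᶜ.Infinite) : (f '' s)ᶜ.Infinite :=
  (hg.sdiff hfg.finite_image_sdiff_image).mono fun _ hy hfy =>
    hy.2 ⟨hfy, hy.1⟩

end Filter

theorem exists_seq_of_forall_exists_succ {P : ℕ → X → Prop} {Q : ℕ → X → X → Prop}
    (h0 : ∃ x, P 0 x) (hs : ∀ n x, P n x → ∃ y, P (n + 1) y ∧ Q n x y) :
    ∃ f : ℕ → X, (∀ n, P n (f n)) ∧ ∀ n, Q n (f n) (f (n + 1)) := by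
  choose next hnext hQ using hs
  obtain ⟨x₀, hx₀⟩ := h0
  let f : ∀ n, {x // P n x} := fun n =>
    Nat.rec ⟨x₀, hx₀⟩ (fun n x => ⟨next n x x.2, hnext n x x.2⟩) n
  exact ⟨fun n => (f n).1, fun n => (f n).2, fun n => hQ n (f n).1 (f n).2⟩

namespace Set

theorem injOn_iUnion_of_directed {ι : Type*} {s : ι → Set X} {f : X → Y}
    (hs : Directed (· ⊆ ·) s) (hf : ∀ i, InjOn f (s i)) : InjOn f (⋃ i, s i) := by
  intro x hx y hy hxy
  obtain ⟨i, hi⟩ := mem_iUnion.1 hx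
  obtain ⟨j, hj⟩ := mem_iUnion.1 hy
  obtain ⟨k, hik, hjk⟩ := hs i j
  exact hf k (hik hi) (hjk hj) hxy

theorem InjOn.piecewise {s t : Set X} [∀ x, Decidable (x ∈ s)] {f g : X → Y}
    (hf : InjOn f (t ∩ s)) (hg : InjOn g (t \ s))
    (hfg : ∀ x ∈ t ∩ s, ∀ y ∈ t \ s, f x ≠ g y) : InjOn (s.piecewise f g) t := by
  rw [← inter_union_sdiff t s, injOn_union disjoint_sdiff_inter.symm]
  refine ⟨hf.congr ?_, hg.congr ?_, fun x hx y hy => ?_⟩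
  · exact (piecewise_eqOn s f g).symm.mono inter_subset_right
  · exact (piecewise_eqOn_compl s f g).symm.mono (sdiff_subset_compl t s)
  · rw [piecewise_eq_of_mem s f g hx.2, piecewise_eq_of_notMem s f g hy.2]
    exact hfg x hx y hy

theorem exists_injOn_insert {s : Set X} {f : X → Y} {a : X} (ha : a ∉ s)
    (hf : InjOn f s) (hfs : (f '' s)ᶜ.Infinite) :
    ∃ e : X → Y, EqOn e f s ∧ InjOn e (insert a s) ∧ (e '' insert a s)ᶜ.Infinite := by
  classical
  obtain ⟨b, hb⟩ := hfs.nonempty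
  have hef : EqOn (Function.update f a b) f s := fun x hx =>
    Function.update_of_ne (ne_of_mem_of_not_mem hx ha) _ _
  refine ⟨Function.update f a b, hef, (injOn_insert ha).2 ⟨hf.congr hef.symm, ?_⟩, ?_⟩
  · rwa [hef.image_eq, Function.update_self]
  · rw [image_insert_eq, hef.image_eq, Function.update_self, ← union_singleton, compl_union]
    exact hfs.sdiff (finite_singleton b)

theorem finite_sdiff_inter_preimage_image {S T : Set X} {h g : X → Y} {R : Set Y}
    (hST : S ⊆ T) (hg : InjOn g T) (hhg : h =ᶠ[cofinite ⊓ 𝓟 S] g) (hR : R.Finite) :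
    ((T \ S) ∩ g ⁻¹' (h '' S ∪ R)).Finite := by
  refine Finite.of_finite_image ((hhg.finite_image_sdiff_image.union hR).subset ?_)
    (hg.mono (inter_subset_left.trans sdiff_subset))
  rintro _ ⟨x, ⟨⟨hxT, hxS⟩, hhx | hRx⟩, rfl⟩
  · refine Or.inl ⟨hhx, ?_⟩
    rintro ⟨y, hy, hyx⟩
    exact hxS (hg (hST hy) hxT hyx ▸ hy)
  · exact Or.inr hRx

theorem exists_injOn_eqOn_sdiff_mapsTo_compl {C T : Set X} {g : X → Y} {B : Set Y}
    (hC : C.Finite) (hg : InjOn g T) (hB : (g '' T ∪ B)ᶜ.Infinite) :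
    ∃ k : X → Y, EqOn k g (T \ C) ∧ InjOn k T ∧ MapsTo k C Bᶜ := by
  classical
  have : Nonempty Y := hB.nonempty.to_subtype.map Subtype.val
  obtain ⟨φ, hφB, hφ⟩ := hC.exists_injOn_of_encard_le (t := (g '' T ∪ B)ᶜ)
    (by rw [hB.encard_eq]; exact le_top)
  refine ⟨C.piecewise φ g, (piecewise_eqOn_compl C φ g).mono (sdiff_subset_compl T C), ?_,
    fun x hx => ?_⟩
  · exact InjOn.piecewise (hφ.mono inter_subset_right) (hg.mono sdiff_subset)
      fun x hx y hy hxy => hφB hx.2 (Or.inl ⟨y, hy.1, hxy.symm⟩)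
  · rw [piecewise_eq_of_mem C φ g hx]
    exact fun hxB => hφB hx (Or.inr hxB)

theorem exists_injOn_extension {S T : Set X} {h g : X → Y} {R : Set Y} (hST : S ⊆ T)
    (hh : InjOn h S) (hg : InjOn g T) (hgT : (g '' T)ᶜ.Infinite)
    (hhg : h =ᶠ[cofinite ⊓ 𝓟 S] g) (hR : R.Finite) (hhR : Disjoint (h '' S) R) :
    ∃ h' : X → Y, EqOn h' h S ∧ InjOn h' T ∧ h' =ᶠ[cofinite ⊓ 𝓟 T] g ∧
      Disjoint (h' '' T) R := by
  classical
  set C := (T \ S) ∩ g ⁻¹' (h '' S ∪ R)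
  have hC : C.Finite := finite_sdiff_inter_preimage_image hST hg hhg hR
  have hB : (g '' T ∪ (h '' S ∪ R))ᶜ.Infinite := by
    refine (hgT.sdiff (hhg.finite_image_sdiff_image.union hR)).mono ?_
    rintro y ⟨hgy, hy⟩ (hy' | ⟨x, hx, rfl⟩ | hy')
    · exact hgy hy'
    · exact hy (Or.inl ⟨⟨x, hx, rfl⟩, fun h => hgy (image_mono hST h)⟩)
    · exact hy (Or.inr hy')
  obtain ⟨k, hkg, hk, hkC⟩ := exists_injOn_eqOn_sdiff_mapsTo_compl hC hg hB
  have hkT : ∀ x ∈ T \ S, k x ∉ h '' S ∪ R := fun x hx => by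
    by_cases hxC : x ∈ C
    · exact hkC hxC
    · rw [hkg ⟨hx.1, hxC⟩]
      exact fun hgx => hxC ⟨hx, hgx⟩
  refine ⟨S.piecewise h k, piecewise_eqOn S h k, ?_, ?_, ?_⟩
  · exact InjOn.piecewise (hh.mono inter_subset_right) (hk.mono sdiff_subset)
      fun x hx y hy hxy => hkT y hy (Or.inl ⟨x, hx.2, hxy⟩)
  · rw [eventuallyEq_cofinite_inf_principal_iff] at hhg ⊢
    refine (hhg.union hC).subset ?_
    rintro x ⟨hxT, hx⟩
    by_cases hxS : x ∈ S
    · exact Or.inl ⟨hxS, by rwa [piecewise_eq_of_mem S h k hxS] at hx⟩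
    · refine Or.inr (by_contra fun hxC => hx ?_)
      rw [piecewise_eq_of_notMem S h k hxS, hkg ⟨hxT, hxC⟩]
  · rw [disjoint_left]
    rintro _ ⟨x, hxT, rfl⟩ hxR
    by_cases hxS : x ∈ S
    · rw [piecewise_eq_of_mem S h k hxS] at hxR
      exact disjoint_left.1 hhR ⟨x, hxS, rfl⟩ hxR
    · rw [piecewise_eq_of_notMem S h k hxS] at hxR
      exact hkT x ⟨hxT, hxS⟩ (Or.inr hxR)

theorem exists_forall_eqOn_of_monotone {S : ℕ → Set X} (hS : Monotone S) {h : ℕ → X → Y}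
    (hh : ∀ n, EqOn (h (n + 1)) (h n) (S n)) : ∃ e : X → Y, ∀ n, EqOn e (h n) (S n) := by
  classical
  have hle : ∀ n m, n ≤ m → EqOn (h m) (h n) (S n) := fun n m hnm => by
    induction m, hnm using Nat.le_induction with
    | base => exact eqOn_refl _ _
    | succ m hnm ih => exact ((hh m).mono (hS hnm)).trans ih
  refine ⟨fun x => h (if hx : ∃ n, x ∈ S n then Nat.find hx else 0) x, fun n x hx => ?_⟩
  have hx' : ∃ n, x ∈ S n := ⟨n, hx⟩
  simp only [dif_pos hx']
  exact (hle _ n (Nat.find_min' hx' hx) (Nat.find_spec hx')).symm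

theorem infinite_iUnion_of_card_eq {R : ℕ → Finset Y} (hR : ∀ n, (R n).card = n) :
    (⋃ n, (R n : Set Y)).Infinite := fun hfin => by
  have := Finset.card_le_card (s := R (hfin.toFinset.card + 1)) fun x hx =>
    hfin.mem_toFinset.2 (mem_iUnion.2 ⟨_, hx⟩)
  rw [hR] at this
  omega

theorem exists_injOn_iUnion {S : ℕ → Set X} (hS : Monotone S) {g : ℕ → X → Y}
    (hg : ∀ n, InjOn (g n) (S n)) (hgS : ∀ n, (g n '' S n)ᶜ.Infinite)
    (hcoh : ∀ n, g n =ᶠ[cofinite ⊓ 𝓟 (S n)] g (n + 1)) :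
    ∃ e : X → Y, InjOn e (⋃ n, S n) ∧ (e '' ⋃ n, S n)ᶜ.Infinite ∧
      ∀ n, e =ᶠ[cofinite ⊓ 𝓟 (S n)] g n := by
  classical
  -- `p n = (hₙ, Rₙ)`: `hₙ` is the limit function on `S n`, and the `n` values in `Rₙ` are
  -- reserved forever, so that they stay outside the range of the limit function.
  obtain ⟨p, hp, hpp⟩ := exists_seq_of_forall_exists_succ
    (P := fun n (p : (X → Y) × Finset Y) => InjOn p.1 (S n) ∧
      p.1 =ᶠ[cofinite ⊓ 𝓟 (S n)] g n ∧ Disjoint (p.1 '' S n) p.2 ∧ p.2.card = n)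
    (Q := fun n p q => EqOn q.1 p.1 (S n) ∧ p.2 ⊆ q.2)
    ⟨(g 0, ∅), hg 0, EventuallyEq.rfl, by simp, rfl⟩ fun n ⟨h, R⟩ ⟨hh, hhg, hhR, hR⟩ => by
      obtain ⟨h', hh'h, hh', hh'g, hh'R⟩ := exists_injOn_extension (hS n.le_succ) hh
        (hg (n + 1)) (hgS (n + 1)) (hhg.trans (hcoh n)) R.finite_toSet hhR
      obtain ⟨m, hm', hmR⟩ :=
        ((hh'g.infinite_compl_image (hgS (n + 1))).sdiff R.finite_toSet).nonempty
      refine ⟨(h', insert m R), ⟨hh', hh'g, ?_, ?_⟩, hh'h, Finset.subset_insert m R⟩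
      · rw [Finset.coe_insert, disjoint_insert_right]
        exact ⟨hm', hh'R⟩
      · rw [Finset.card_insert_of_notMem hmR, hR]
  obtain ⟨e, he⟩ := exists_forall_eqOn_of_monotone hS (h := fun n => (p n).1) fun n => (hpp n).1
  have hRmono : Monotone fun n => (p n).2 := monotone_nat_of_le_succ fun n => (hpp n).2
  refine ⟨e, injOn_iUnion_of_directed hS.directed_le fun n => (hp n).1.congr (he n).symm, ?_,
    fun n => (eventuallyEq_of_mem (mem_inf_of_right (mem_principal_self _)) (he n)).trans
      (hp n).2.1⟩
  refine (infinite_iUnion_of_card_eq fun n => (hp n).2.2.2).mono ?_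
  rintro y hy ⟨x, hx, rfl⟩
  obtain ⟨m, hm⟩ := mem_iUnion.1 hy
  obtain ⟨n, hn⟩ := mem_iUnion.1 hx
  refine disjoint_left.1 (hp (max m n)).2.2.1 ⟨x, hS (le_max_right m n) hn, ?_⟩
    (hRmono (le_max_left m n) hm)
  exact (he _ (hS (le_max_right m n) hn)).symm

end Set

universe u

namespace Ordinal

open Order

theorem countable_Iio_of_lt_ord_aleph_one {α : Ordinal.{u}} (hα : α < (Cardinal.aleph 1).ord) :
    (Iio α).Countable := by
  rw [← Cardinal.le_aleph0_iff_set_countable, Cardinal.mk_Iio_ordinal, Cardinal.lift_le_aleph0,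
    ← Cardinal.lt_aleph_one_iff]
  exact Cardinal.lt_ord.1 hα

theorem exists_monotone_iUnion_Iio_eq {α : Ordinal.{u}} (hα : IsSuccLimit α)
    (hc : (Iio α).Countable) :
    ∃ a : ℕ → Ordinal.{u}, Monotone a ∧ (∀ n, a n < α) ∧ ⋃ n, Iio (a n) = Iio α := by
  have : Countable (Iio α) := hc.to_subtype
  have : Nonempty (Iio α) := ⟨⟨0, hα.bot_lt⟩⟩
  obtain ⟨x, hx, hxα⟩ := exists_seq_monotone_tendsto_atTop_atTop (Iio α)
  refine ⟨fun n => succ (x n : Ordinal), fun m n hmn => succ_le_succ (hx hmn),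
    fun n => hα.succ_lt (x n).2, Subset.antisymm (iUnion_subset fun n => ?_) fun γ hγ => ?_⟩
  · exact Iio_subset_Iio (hα.succ_lt (x n).2).le
  · obtain ⟨n, hn⟩ := (hxα.eventually_ge_atTop ⟨γ, hγ⟩).exists
    exact mem_iUnion.2 ⟨n, lt_succ_iff.2 (Subtype.coe_le_coe.2 hn)⟩

theorem exists_coherent_injOn {Y : Type*} [Infinite Y] {α : Ordinal.{u}}
    (hα : (Iio α).Countable) (F : Ordinal.{u} → Ordinal.{u} → Y)
    (hF : ∀ β < α, InjOn (F β) (Iio β) ∧ (F β '' Iio β)ᶜ.Infinite)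
    (hcoh : ∀ β < α, ∀ γ < β, F β =ᶠ[cofinite ⊓ 𝓟 (Iio γ)] F γ) :
    ∃ e, InjOn e (Iio α) ∧ (e '' Iio α)ᶜ.Infinite ∧
      ∀ β < α, e =ᶠ[cofinite ⊓ 𝓟 (Iio β)] F β := by
  rcases zero_or_succ_or_isSuccLimit α with rfl | ⟨β, rfl⟩ | hlim
  · exact ⟨F 0, by simp [infinite_univ]⟩
  · obtain ⟨e, heF, he, heI⟩ := exists_injOn_insert self_notMem_Iio (hF β (lt_succ β)).1
      (hF β (lt_succ β)).2
    rw [← Iio_succ_eq_insert] at he heI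
    have heF' : e =ᶠ[cofinite ⊓ 𝓟 (Iio β)] F β :=
      heF.eventuallyEq_of_mem (mem_inf_of_right (mem_principal_self _))
    refine ⟨e, he, heI, fun γ hγ => ?_⟩
    rcases (lt_succ_iff.1 hγ).eq_or_lt with rfl | hγβ
    · exact heF'
    · refine (heF'.filter_mono ?_).trans (hcoh β (lt_succ β) γ hγβ)
      exact inf_le_inf_left _ (principal_mono.2 (Iio_subset_Iio hγβ.le))
  · obtain ⟨a, ha, haα, hUnion⟩ := exists_monotone_iUnion_Iio_eq hlim hα
    have hstep : ∀ n, F (a n) =ᶠ[cofinite ⊓ 𝓟 (Iio (a n))] F (a (n + 1)) := fun n => by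
      rcases (ha n.le_succ).eq_or_lt with h | h
      · rw [h]
      · exact (hcoh _ (haα _) _ h).symm
    obtain ⟨e, he, heI, heF⟩ := exists_injOn_iUnion (fun m n h => Iio_subset_Iio (ha h))
      (fun n => (hF _ (haα n)).1) (fun n => (hF _ (haα n)).2) hstep
    rw [hUnion] at he heI
    refine ⟨e, he, heI, fun γ hγ => ?_⟩
    obtain ⟨n, hn⟩ := mem_iUnion.1 (hUnion.symm ▸ hγ : γ ∈ ⋃ n, Iio (a n))
    refine ((heF n).filter_mono ?_).trans (hcoh _ (haα n) γ hn)
    exact inf_le_inf_left _ (principal_mono.2 (Iio_subset_Iio hn.le))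

noncomputable def coherentSeq (α : Ordinal.{u}) : Ordinal.{u} → ℕ :=
  Classical.epsilon fun e => InjOn e (Iio α) ∧ (e '' Iio α)ᶜ.Infinite ∧
    ∀ β < α, e =ᶠ[cofinite ⊓ 𝓟 (Iio β)] coherentSeq β
termination_by α

theorem coherentSeq_spec {α : Ordinal.{u}} (hα : α < (Cardinal.aleph 1).ord) :
    InjOn (coherentSeq α) (Iio α) ∧ (coherentSeq α '' Iio α)ᶜ.Infinite ∧
      ∀ β < α, coherentSeq α =ᶠ[cofinite ⊓ 𝓟 (Iio β)] coherentSeq β := by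
  induction α using WellFoundedLT.induction with
  | _ α ih =>
    rw [coherentSeq]
    exact Classical.epsilon_spec <| exists_coherent_injOn (countable_Iio_of_lt_ord_aleph_one hα)
      coherentSeq (fun β hβ => (ih β hβ (hβ.trans hα)).imp_right And.left)
      fun β hβ => (ih β hβ (hβ.trans hα)).2.2

end Ordinal

/-- There exists a coherent sequence of one-to-one functions f_α : α → ℕ for
ω ≤ α < ω₁; here f_α is represented as a function on all ordinals which is
only required to be injective on {γ | γ < α}, and coherence means f_β and f_α
agree on all but finitely many γ < α. -/
theorem exists_coherent_sequence :
    ∃ f : Ordinal.{0} → Ordinal.{0} → ℕ,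
      (∀ α : Ordinal.{0}, Ordinal.omega0 ≤ α → α < (Cardinal.aleph 1).ord →
        Set.InjOn (f α) {γ : Ordinal.{0} | γ < α}) ∧
      (∀ α β : Ordinal.{0}, Ordinal.omega0 ≤ α → α < β → β < (Cardinal.aleph 1).ord →
        {γ : Ordinal.{0} | γ < α ∧ f β γ ≠ f α γ}.Finite) :=
  ⟨Ordinal.coherentSeq, fun _ _ hα => (Ordinal.coherentSeq_spec hα).1,
    fun α _ _ hαβ hβ =>
      eventuallyEq_cofinite_inf_principal_iff.1 ((Ordinal.coherentSeq_spec hβ).2.2 α hαβ)⟩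
end

section
/- If there exists a Luzin set in Baire space ℕ → ℕ, then property (**) holds: there exists a family (h_α : ℕ → ω₁)_{α<ω₁} such that for every k : ℕ → ω₁, for all but countably many α < ω₁ there are infinitely many n with h_α(n) = k(n). -/
open Cardinal Set

/-!
Build by transfinite recursion a coherent sequence of injections `e_α : α → ℕ` (`α < ω₁`):
each `e_α` has coinfinite range, and `e_α`, `e_γ` differ at only finitely many points below
`min α γ`. Coinfiniteness is what leaves room to continue at limit stages.

Enumerate `ω₁` distinct points `x_α` of the Luzin set and decode: `h_α n` is the `ξ < α`
with `e_α ξ = x_α n`. Given `k`, bound its range by some `β < ω₁`. For `α > β`,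
`x_α n = e_α (k n)` forces `h_α n = k n`, and by coherence the restrictions `e_α ↾ β` form a
countable family. So every bad `α > β` lies in one of countably many meagre sets
`{y | y n = r (k n) for finitely many n}`, each meeting the Luzin set in a countable set.
-/

open Filter Function

section AlmostEqOn

variable {α β : Type*}

def AlmostEqOn (s : Set α) (f g : α → β) : Prop := f =ᶠ[cofinite ⊓ 𝓟 s] g

variable {s t : Set α} {f g h : α → β}

theorem almostEqOn_iff : AlmostEqOn s f g ↔ {x ∈ s | f x ≠ g x}.Finite := by
  simp only [AlmostEqOn, EventuallyEq, eventually_inf_principal, eventually_cofinite,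
    Classical.not_imp]

theorem Set.EqOn.almostEqOn (hfg : EqOn f g s) : AlmostEqOn s f g :=
  almostEqOn_iff.2 <| finite_empty.subset fun _ hx => hx.2 (hfg hx.1)

theorem AlmostEqOn.symm (hfg : AlmostEqOn s f g) : AlmostEqOn s g f := EventuallyEq.symm hfg

theorem AlmostEqOn.trans (hfg : AlmostEqOn s f g) (hgh : AlmostEqOn s g h) : AlmostEqOn s f h :=
  EventuallyEq.trans hfg hgh

theorem AlmostEqOn.mono (hfg : AlmostEqOn t f g) (hst : s ⊆ t) : AlmostEqOn s f g :=
  EventuallyEq.filter_mono hfg (inf_le_inf_left _ (principal_mono.2 hst))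

theorem almostEqOn_update [DecidableEq α] (f : α → β) (a : α) (b : β) :
    AlmostEqOn s (update f a b) f :=
  almostEqOn_iff.2 <| (finite_singleton a).subset fun x hx => by
    by_contra hxa
    exact hx.2 (update_of_ne hxa b f)

theorem AlmostEqOn.exists_image_subset (hfg : AlmostEqOn s f g) :
    ∃ V : Set β, V.Finite ∧ f '' s ⊆ g '' s ∪ V := by
  refine ⟨f '' {x ∈ s | f x ≠ g x}, (almostEqOn_iff.1 hfg).image f, ?_⟩
  rintro _ ⟨x, hx, rfl⟩
  by_cases hfx : f x = g x
  · exact Or.inl ⟨x, hx, hfx.symm⟩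
  · exact Or.inr ⟨x, ⟨hx, hfx⟩, rfl⟩

theorem countable_setOf_eqOn_compl [Countable β] {F : Set α} (hF : F.Finite) (g : α → β) :
    {f : α → β | EqOn f g Fᶜ}.Countable := by
  classical
  have := hF.to_subtype
  refine (countable_range fun (u : F → β) x =>
    if hx : x ∈ F then u ⟨x, hx⟩ else g x).mono ?_
  intro f hf
  refine ⟨fun x : F => f x, funext fun x => ?_⟩
  by_cases hx : x ∈ F
  · simp [hx]
  · simp [hx, hf hx]

theorem countable_indicator_image_setOf_almostEqOn [Zero β] [Countable β] (hs : s.Countable)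
    (g : α → β) : (s.indicator '' {f | AlmostEqOn s f g}).Countable := by
  refine ((countable_ofPred_finite_subset hs).biUnion fun F hF =>
    countable_setOf_eqOn_compl hF.1 (s.indicator g)).mono ?_
  rintro _ ⟨f, hfg, rfl⟩
  refine mem_biUnion ⟨almostEqOn_iff.1 hfg, fun x hx => hx.1⟩ fun x hx => ?_
  by_cases hxs : x ∈ s
  · simp only [indicator_of_mem hxs]
    by_contra hne
    exact hx ⟨hxs, hne⟩
  · simp only [indicator_of_notMem hxs]

end AlmostEqOn

section CoinfiniteInjection

variable {α : Type*}

def IsCoinfInjOn (f : α → ℕ) (s : Set α) : Prop := InjOn f s ∧ (f '' s)ᶜ.Infinite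

theorem isCoinfInjOn_empty (f : α → ℕ) : IsCoinfInjOn f ∅ :=
  ⟨injOn_empty f, by simpa using infinite_univ⟩

theorem IsCoinfInjOn.exists_update_insert [DecidableEq α] {f : α → ℕ} {s : Set α} {a : α}
    (hf : IsCoinfInjOn f s) (ha : a ∉ s) : ∃ n, IsCoinfInjOn (update f a n) (insert a s) := by
  obtain ⟨n, hn⟩ := hf.2.nonempty
  have heq : EqOn (update f a n) f s := fun x hx => update_of_ne (ne_of_mem_of_not_mem hx ha) n f
  refine ⟨n, (injOn_insert ha).2 ⟨hf.1.congr heq.symm, ?_⟩, ?_⟩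
  · rwa [heq.image_eq, update_self]
  · rw [image_insert_eq, heq.image_eq, update_self, ← union_singleton, compl_union]
    exact hf.2.sdiff (finite_singleton n)

theorem Set.InjOn.exists_relabel {g : α → ℕ} {T B : Set α} {W : Set ℕ} (hg : InjOn g T)
    (hgT : (g '' T)ᶜ.Infinite) (hB : B.Finite) (hBT : B ⊆ T) (hW : W.Finite) :
    ∃ h : α → ℕ, InjOn h T ∧ EqOn h g (T \ B) ∧ MapsTo h B (g '' T ∪ W)ᶜ := by
  classical
  have hfree : (g '' T ∪ W)ᶜ.Infinite := by
    rw [compl_union]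
    exact hgT.sdiff hW
  obtain ⟨c, hcB, hc⟩ := hB.exists_injOn_of_encard_le (t := (g '' T ∪ W)ᶜ)
    (hfree.encard_eq ▸ le_top)
  have hcg : EqOn (B.piecewise c g) g (T \ B) :=
    (piecewise_eqOn_compl B c g).mono fun _ hx => hx.2
  refine ⟨B.piecewise c g, ?_, hcg, fun x hx => ?_⟩
  · rw [← union_sdiff_cancel hBT, injOn_union disjoint_sdiff_right]
    refine ⟨hc.congr (piecewise_eqOn B c g).symm, (hg.mono sdiff_subset).congr hcg.symm,
      fun x hx y hy hxy => ?_⟩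
    rw [piecewise_eqOn B c g hx, hcg hy] at hxy
    exact hcB hx (Or.inl ⟨y, hy.1, hxy.symm⟩)
  · rw [piecewise_eqOn B c g hx]
    exact hcB hx

theorem Set.InjOn.exists_extend {S T : Set α} {f g : α → ℕ} {P : Set ℕ} (hf : InjOn f S)
    (hg : InjOn g T) (hgT : (g '' T)ᶜ.Infinite) (hST : S ⊆ T) (hfg : AlmostEqOn S f g)
    (hP : P.Finite) :
    ∃ f', InjOn f' T ∧ EqOn f' f S ∧ AlmostEqOn T f' g ∧ Disjoint (f' '' (T \ S)) P := by
  classical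
  obtain ⟨V, hV, hfV⟩ := hfg.exists_image_subset
  -- outside `S`, `g` is kept except on `B`, where it could collide with `f` or hit `P`
  set B := {x ∈ T \ S | g x ∈ V ∪ P}
  have hB : B.Finite := ((hV.union hP).subset (image_subset_iff.2 fun _ hx => hx.2)).of_finite_image
    (hg.mono fun _ hx => hx.1.1)
  obtain ⟨h, hh, hhg, hhB⟩ := hg.exists_relabel hgT hB (fun _ hx => hx.1.1) (hV.union hP)
  have hhS : EqOn h g S :=
    hhg.mono fun x hx => show x ∈ T \ B from ⟨hST hx, fun hxB => hxB.1.2 hx⟩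
  have hfresh : ∀ x ∈ T \ S, h x ∉ V ∪ P := by
    intro x hx
    by_cases hxB : x ∈ B
    · exact fun hmem => hhB hxB (Or.inr hmem)
    · rw [hhg ⟨hx.1, hxB⟩]
      exact fun hmem => hxB ⟨hx, hmem⟩
  have hf'h : EqOn (S.piecewise f h) h (T \ S) :=
    (piecewise_eqOn_compl S f h).mono fun _ hx => hx.2
  refine ⟨S.piecewise f h, ?_, piecewise_eqOn S f h, ?_, ?_⟩
  · rw [← union_sdiff_cancel hST, injOn_union disjoint_sdiff_right]
    refine ⟨hf.congr (piecewise_eqOn S f h).symm, (hh.mono sdiff_subset).congr hf'h.symm,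
      fun x hx y hy hxy => ?_⟩
    rw [piecewise_eqOn S f h hx, hf'h hy] at hxy
    rcases hfV ⟨x, hx, rfl⟩ with ⟨z, hz, hgz⟩ | hxV
    · rw [← hhS hz] at hgz
      exact hy.2 (hh (hST hz) hy.1 (hgz.trans hxy) ▸ hz)
    · exact hfresh y hy (Or.inl (hxy ▸ hxV))
  · refine almostEqOn_iff.2 (((almostEqOn_iff.1 hfg).union hB).subset ?_)
    rintro x ⟨hxT, hne⟩
    by_cases hxS : x ∈ S
    · exact Or.inl ⟨hxS, by rwa [piecewise_eqOn S f h hxS] at hne⟩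
    · by_contra hxB
      exact hne ((hf'h ⟨hxT, hxS⟩).trans (hhg ⟨hxT, fun hB => hxB (Or.inr hB)⟩))
  · rw [hf'h.image_eq, disjoint_left]
    rintro _ ⟨x, hx, rfl⟩ hxP
    exact hfresh x hx (Or.inr hxP)

theorem Set.InjOn.exists_extend_reserving {S T : Set α} {f g : α → ℕ} {Q : Set ℕ}
    (hf : InjOn f S) (hg : InjOn g T) (hgT : (g '' T)ᶜ.Infinite) (hST : S ⊆ T)
    (hfg : AlmostEqOn S f g) (hQ : Q.Finite) (hQf : Disjoint Q (f '' S)) (N : ℕ) :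
    ∃ f' p, N < p ∧ InjOn f' T ∧ EqOn f' f S ∧ AlmostEqOn T f' g ∧
      Disjoint (insert p Q) (f' '' T) := by
  obtain ⟨V, hV, hfV⟩ := hfg.exists_image_subset
  have hfree : ((f '' S)ᶜ \ Q).Infinite := by
    refine ((hgT.sdiff hV).sdiff hQ).mono (sdiff_subset_sdiff_left fun m hm hmf => ?_)
    rcases hfV hmf with hm' | hm'
    · exact hm.1 (image_mono hST hm')
    · exact hm.2 hm'
  obtain ⟨p, ⟨hpf, -⟩, hNp⟩ := hfree.exists_gt N
  obtain ⟨f', hf', hf'f, hf'g, hf'P⟩ := hf.exists_extend hg hgT hST hfg (hQ.insert p)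
  refine ⟨f', p, hNp, hf', hf'f, hf'g, ?_⟩
  rw [← union_sdiff_cancel hST, image_union, hf'f.image_eq, disjoint_union_right]
  exact ⟨disjoint_insert_left.2 ⟨hpf, hQf⟩, hf'P.symm⟩

end CoinfiniteInjection

theorem exists_seq_of_forall_exists_succ_s11 {β : Type*} {P : ℕ → β → Prop}
    {R : ℕ → β → β → Prop} {b₀ : β} (h₀ : P 0 b₀)
    (h : ∀ n b, P n b → ∃ b', P (n + 1) b' ∧ R n b b') :
    ∃ u : ℕ → β, ∀ n, P n (u n) ∧ R n (u n) (u (n + 1)) := by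
  choose! next hnext using h
  let u : ℕ → β := fun n => Nat.rec b₀ next n
  have hu : ∀ n, P n (u n) := fun n => by
    induction n with
    | zero => exact h₀
    | succ n ih => exact (hnext n _ ih).1
  exact ⟨u, fun n => ⟨hu n, (hnext n _ (hu n)).2⟩⟩

theorem exists_eqOn_of_eqOn_succ {α β : Type*} {S : ℕ → Set α} (hS : Monotone S)
    {f : ℕ → α → β} (hf : ∀ n, EqOn (f (n + 1)) (f n) (S n)) :
    ∃ e : α → β, ∀ n, EqOn e (f n) (S n) := by
  classical
  have hle : ∀ {n m}, n ≤ m → EqOn (f m) (f n) (S n) := by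
    intro n m hnm
    induction m, hnm using Nat.le_induction with
    | base => exact eqOn_refl _ _
    | succ m hnm ih => exact ((hf m).mono (hS hnm)).trans ih
  refine ⟨fun x => if hx : ∃ n, x ∈ S n then f (Nat.find hx) x else f 0 x, fun n x hx => ?_⟩
  have hex : ∃ n, x ∈ S n := ⟨n, hx⟩
  simp only [dif_pos hex]
  exact ((hle (Nat.find_min' hex hx)) (Nat.find_spec hex)).symm

theorem exists_isCoinfInjOn_iUnion {α : Type*} {S : ℕ → Set α} (hS : Monotone S)
    {g : ℕ → α → ℕ} (hg : ∀ n, IsCoinfInjOn (g n) (S n))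
    (hgg : ∀ n, AlmostEqOn (S n) (g (n + 1)) (g n)) :
    ∃ e, IsCoinfInjOn e (⋃ n, S n) ∧ ∀ n, AlmostEqOn (S n) e (g n) := by
  -- Stage `n` is a pair `(f, Q)`: `f` is injective on `S n` and `Q` is a finite set of values
  -- reserved forever; each stage reserves a new value above `n`, so the glued map misses
  -- infinitely many values.
  obtain ⟨u, hu⟩ := exists_seq_of_forall_exists_succ_s11 (b₀ := (g 0, ∅))
    (P := fun n fQ => InjOn fQ.1 (S n) ∧ AlmostEqOn (S n) fQ.1 (g n) ∧ fQ.2.Finite ∧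
      Disjoint fQ.2 (fQ.1 '' S n))
    (R := fun n fQ fQ' => EqOn fQ'.1 fQ.1 (S n) ∧ ∃ p, n < p ∧ fQ'.2 = insert p fQ.2)
    ⟨(hg 0).1, (eqOn_refl _ _).almostEqOn, finite_empty, empty_disjoint _⟩
    (fun n ⟨f, Q⟩ ⟨hf, hfg, hQ, hQf⟩ => by
      obtain ⟨f', p, hnp, hf', hf'f, hf'g, hdisj⟩ := hf.exists_extend_reserving (hg (n + 1)).1
        (hg (n + 1)).2 (hS n.le_succ) (hfg.trans (hgg n).symm) hQ hQf n
      exact ⟨(f', insert p Q), ⟨hf', hf'g, hQ.insert p, hdisj⟩, hf'f, p, hnp, rfl⟩)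
  obtain ⟨e, he⟩ := exists_eqOn_of_eqOn_succ hS (f := fun n => (u n).1) fun n => (hu n).2.1
  have hQ : Monotone fun n => (u n).2 := monotone_nat_of_le_succ fun n => by
    obtain ⟨p, -, hp⟩ := (hu n).2.2
    exact hp ▸ subset_insert p _
  refine ⟨e, ⟨inj_on_iUnion_of_directed hS.directed_le fun n => (hu n).1.1.congr (he n).symm,
    (infinite_of_forall_exists_gt fun N => ?_).mono (?_ : (⋃ n, (u n).2) ⊆ _)⟩,
    fun n => (he n).almostEqOn.trans (hu n).1.2.1⟩
  · obtain ⟨p, hNp, hp⟩ := (hu N).2.2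
    exact ⟨p, mem_iUnion.2 ⟨N + 1, hp ▸ mem_insert p _⟩, hNp⟩
  · rintro q hq ⟨x, hx, rfl⟩
    obtain ⟨n, hqn⟩ := mem_iUnion.1 hq
    obtain ⟨m, hxm⟩ := mem_iUnion.1 hx
    have hxk : x ∈ S (max n m) := hS (le_max_right n m) hxm
    exact disjoint_left.1 (hu (max n m)).1.2.2.2 (hQ (le_max_left n m) hqn)
      ⟨x, hxk, (he _ hxk).symm⟩

section Ordinal

open Order Ordinal

theorem Ordinal.exists_monotone_iUnion_Iio_eq_s11 {a : Ordinal} (hlim : IsSuccLimit a)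
    (ha : (Iio a).Countable) :
    ∃ s : ℕ → Ordinal, Monotone s ∧ (∀ n, s n < a) ∧ ⋃ n, Iio (s n) = Iio a := by
  obtain ⟨g, hg⟩ := ha.exists_eq_range ⟨0, hlim.pos⟩
  have hga : ∀ n, g n < a := fun n => (hg ▸ mem_range_self n : g n ∈ Iio a)
  have hsa : ∀ n, partialSups g n < a := fun n => by
    induction n with
    | zero => simpa using hga 0
    | succ n ih => simpa [partialSups_add_one] using ⟨ih, hga (n + 1)⟩
  refine ⟨partialSups g, (partialSups g).monotone, hsa,
    (iUnion_subset fun n => Iio_subset_Iio (hsa n).le).antisymm fun c hc => ?_⟩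
  obtain ⟨n, hn⟩ : succ c ∈ range g := hg ▸ hlim.succ_lt hc
  exact mem_iUnion.2 ⟨n, (lt_succ c).trans_le (hn ▸ le_partialSups g n)⟩

theorem Ordinal.exists_coherent_extension {a : Ordinal} (ha : (Iio a).Countable)
    (F : Ordinal → Ordinal → ℕ)
    (hF : ∀ c < a, IsCoinfInjOn (F c) (Iio c) ∧ ∀ d < c, AlmostEqOn (Iio d) (F c) (F d)) :
    ∃ e, IsCoinfInjOn e (Iio a) ∧ ∀ c < a, AlmostEqOn (Iio c) e (F c) := by
  classical
  rcases zero_or_succ_or_isSuccLimit a with rfl | ⟨b, rfl⟩ | hlim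
  · refine ⟨F 0, ?_, fun _ hc => (not_lt_zero hc).elim⟩
    simpa using isCoinfInjOn_empty (F 0)
  · obtain ⟨hb, hbF⟩ := hF b (lt_succ b)
    obtain ⟨n, hn⟩ := hb.exists_update_insert self_notMem_Iio
    refine ⟨update (F b) b n, by rwa [Iio_succ_eq_insert], fun c hc => ?_⟩
    rcases (lt_succ_iff.1 hc).lt_or_eq with hcb | rfl
    · exact (almostEqOn_update _ _ _).trans (hbF c hcb)
    · exact almostEqOn_update _ _ _
  · obtain ⟨s, hs, hsa, hU⟩ := exists_monotone_iUnion_Iio_eq_s11 hlim ha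
    obtain ⟨e, he, heF⟩ := exists_isCoinfInjOn_iUnion (fun _ _ h => Iio_subset_Iio (hs h))
      (fun n => (hF _ (hsa n)).1) fun n => by
        rcases (hs n.le_succ).lt_or_eq with h | h
        · exact (hF _ (hsa _)).2 _ h
        · exact h ▸ (eqOn_refl _ _).almostEqOn
    refine ⟨e, hU ▸ he, fun c hc => ?_⟩
    obtain ⟨n, hcn⟩ := mem_iUnion.1 (hU.symm ▸ hc : c ∈ ⋃ n, Iio (s n))
    exact ((heF n).mono (Iio_subset_Iio hcn.le)).trans ((hF _ (hsa n)).2 c hcn)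

noncomputable def Ordinal.coherentInj : Ordinal.{u} → Ordinal.{u} → ℕ :=
  lt_wf.fix fun a E => Classical.epsilon fun e =>
    IsCoinfInjOn e (Iio a) ∧ ∀ c (hc : c < a), AlmostEqOn (Iio c) e (E c hc)

theorem Ordinal.coherentInj_spec {a : Ordinal} (ha : (Iio a).Countable) :
    IsCoinfInjOn (coherentInj a) (Iio a) ∧
      ∀ c < a, AlmostEqOn (Iio c) (coherentInj a) (coherentInj c) := by
  induction a using WellFoundedLT.induction with
  | _ a ih =>
    obtain ⟨e, he⟩ := exists_coherent_extension ha coherentInj fun c hc =>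
      ih c hc (ha.mono (Iio_subset_Iio hc.le))
    rw [coherentInj, lt_wf.fix_eq]
    exact Classical.epsilon_spec (p := fun e => IsCoinfInjOn e (Iio a) ∧
      ∀ c (hc : c < a), AlmostEqOn (Iio c) e (coherentInj c)) ⟨e, he.1, fun c hc => he.2 c hc⟩

end Ordinal

namespace Omega1

theorem countable_Iio_val (α : Omega1) : (Iio α.1).Countable := by
  rw [← le_aleph0_iff_set_countable, mk_Iio_ordinal, lift_le_aleph0, ← lt_aleph_one_iff,
    ← Cardinal.lt_ord]
  exact α.2

theorem countable_Iic_s11 (α : Omega1) : (Iic α).Countable :=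
  Iio_insert (a := α) ▸ ((countable_Iio_val α).preimage Subtype.val_injective).insert α

theorem exists_forall_lt (k : ℕ → Omega1) : ∃ β : Omega1, ∀ n, k n < β := by
  have hlim := Cardinal.isSuccLimit_ord (aleph0_le_aleph 1)
  refine ⟨⟨⨆ n, Order.succ (k n).1, (Ordinal.iSup_lt_omega_one fun n =>
    (hlim.succ_lt (k n).2).trans_eq (ord_aleph 1)).trans_eq (ord_aleph 1).symm⟩, fun n => ?_⟩
  exact (Order.lt_succ (k n).1).trans_le (Ordinal.le_iSup (fun n => Order.succ (k n).1) n)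

theorem exists_injective_mem {β : Type*} {L : Set β} (hL : ¬ L.Countable) :
    ∃ x : Omega1 → β, Injective x ∧ ∀ α, x α ∈ L := by
  have hmk : #Omega1 = lift.{1} (aleph.{0} 1) := by
    rw [← card_ord (aleph.{0} 1)]
    exact mk_Iio_ordinal _
  have hL' : aleph 1 ≤ #L := aleph_one_le_iff.2 (not_le.1 (mt le_aleph0_iff_set_countable.1 hL))
  obtain ⟨ι⟩ : Nonempty (Omega1 ↪ L) := lift_mk_le'.1 (by rw [hmk]; simpa using hL')
  exact ⟨fun α => ι α, fun _ _ h => ι.injective (Subtype.ext h), fun α => (ι α).2⟩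

end Omega1

section BaireSpace

open Topology

variable {α : Type*} [TopologicalSpace α] [DiscreteTopology α]

theorem residual_setOf_frequently_eq (f : ℕ → α) :
    {y : ℕ → α | ∃ᶠ n in atTop, y n = f n} ∈ residual (ℕ → α) := by
  simp only [frequently_atTop, ofPred_forall]
  refine countable_iInter_mem.2 fun N => residual_of_dense_open ?_ fun y => ?_
  · rw [show {y : ℕ → α | ∃ n ≥ N, y n = f n} = ⋃ n ∈ Ici N, (· n) ⁻¹' {f n} by
      ext; simp]
    exact isOpen_biUnion fun n _ => (isOpen_discrete _).preimage (continuous_apply n)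
  · classical
    refine mem_closure_of_tendsto (f := fun M n => if n < M then y n else f n) (b := atTop)
      (tendsto_pi_nhds.2 fun n => tendsto_nhds_of_eventually_eq ?_) (Eventually.of_forall fun M =>
        ⟨max N M, le_max_left N M, if_neg (not_lt.2 (le_max_right N M))⟩)
    exact (eventually_gt_atTop n).mono fun M hM => if_pos hM

theorem isMeagre_setOf_finite_eq (f : ℕ → α) :
    IsMeagre {y : ℕ → α | {n | y n = f n}.Finite} := by
  have h := residual_setOf_frequently_eq f
  simp only [Nat.frequently_atTop_iff_infinite] at h
  exact h

end BaireSpace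

/-- If there is a Luzin set in Baire space, then property (**) holds. -/
theorem luzin_implies_star2
    (L : Set (ℕ → ℕ)) (hunc : ¬ L.Countable)
    (hL : ∀ M : Set (ℕ → ℕ), IsMeagre M → (L ∩ M).Countable) :
    ∃ h : Omega1 → ℕ → Omega1,
      ∀ k : ℕ → Omega1, {α : Omega1 | {n : ℕ | h α n = k n}.Finite}.Countable := by
  obtain ⟨x, hx, hxL⟩ := Omega1.exists_injective_mem hunc
  have : Nonempty Omega1 := ⟨⟨0, Cardinal.ord_pos.2 (aleph_pos 1)⟩⟩
  let code (α : Omega1) : Omega1 → ℕ := fun ξ => Ordinal.coherentInj α.1 ξ.1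
  have hcode (α : Omega1) : InjOn (code α) (Iio α) :=
    (Ordinal.coherentInj_spec α.countable_Iio_val).1.1.comp Subtype.val_injective.injOn
      fun _ h => h
  refine ⟨fun α n => invFunOn (code α) (Iio α) (x α n), fun k => ?_⟩
  obtain ⟨β, hβ⟩ := Omega1.exists_forall_lt k
  have hbad : {α | {n | invFunOn (code α) (Iio α) (x α n) = k n}.Finite} ⊆ Iic β ∪
      ⋃ r ∈ (Iio β.1).indicator '' {f | AlmostEqOn (Iio β.1) f (Ordinal.coherentInj β.1)},
        x ⁻¹' (L ∩ {y | {n | y n = r (k n).1}.Finite}) := by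
    intro α hα
    refine (le_or_gt α β).imp id fun hβα => mem_biUnion ⟨Ordinal.coherentInj α.1,
      (Ordinal.coherentInj_spec α.countable_Iio_val).2 β.1 hβα, rfl⟩
      ⟨hxL α, hα.subset fun n hn => ?_⟩
    rw [mem_ofPred_eq, indicator_of_mem (show (k n).1 ∈ Iio β.1 from hβ n)] at hn
    rw [mem_ofPred_eq, hn]
    exact (hcode α).leftInvOn_invFunOn ((hβ n).trans hβα)
  refine (β.countable_Iic_s11.union ((countable_indicator_image_setOf_almostEqOn
    β.countable_Iio_val _).biUnion fun r _ => ?_)).mono hbad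
  exact (hL _ (isMeagre_setOf_finite_eq _)).preimage hx
end

section
/- Suppose that every family of functions ℕ → ℕ of cardinality at most ℵ₁ has an eventually dominating bound, i.e., for every S ⊆ (ℕ → ℕ) with |S| ≤ ℵ₁ there exists g : ℕ → ℕ such that for every f ∈ S, f(n) < g(n) for all but finitely many n (this is the statement 𝔟 > ℵ₁). Then property (**) fails: there is no family (g_α : ℕ → ω₁)_{α<ω₁} such that for every k : ℕ → ω₁, for all but countably many α there are infinitely many n with k(n) = g_α(n). -/
open Cardinal Set

/-- If every family of at most ℵ₁ functions ℕ → ℕ has an eventually dominating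
bound (i.e. 𝔟 > ℵ₁), then property (**) fails. -/
theorem b_gt_aleph1_implies_not_star2
    (hb : ∀ S : Set (ℕ → ℕ), #S ≤ Cardinal.aleph 1 →
      ∃ g : ℕ → ℕ, ∀ f ∈ S, {n : ℕ | ¬ f n < g n}.Finite) :
    ¬ ∃ gfam : Omega1 → ℕ → Omega1,
      ∀ k : ℕ → Omega1, {α : Omega1 | {n : ℕ | k n = gfam α n}.Finite}.Countable := by
  rintro ⟨gfam, hfam⟩
  classical
  -- code each gfam α as a function ℕ → ℕ
  set f : Omega1 → ℕ → ℕ := fun α n =>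
    if h : ∃ m : ℕ, (gfam α n).1 = (m : Ordinal) then h.choose else 0 with hf
  have hmk : #Omega1 = Cardinal.lift.{1,0} (Cardinal.aleph 1) := by
    have := Ordinal.mk_Iio_ordinal ((Cardinal.aleph 1).ord)
    rwa [Cardinal.card_ord] at this
  have hS : #(Set.range f) ≤ Cardinal.aleph 1 := by
    have h1 : Cardinal.lift.{1} #(Set.range f) ≤ Cardinal.lift.{0} #Omega1 :=
      Cardinal.mk_range_le_lift
    rw [Cardinal.lift_id', hmk] at h1
    exact Cardinal.lift_le.mp h1
  obtain ⟨g, hg⟩ := hb _ hS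
  -- the natural numbers as elements of Omega1
  have hnat : ∀ m : ℕ, ((m : Ordinal) : Ordinal.{0}) < (Cardinal.aleph 1).ord := by
    intro m
    refine lt_of_lt_of_le (Ordinal.nat_lt_omega0 m) ?_
    rw [← Cardinal.ord_aleph0]
    exact Cardinal.ord_le_ord.2 (Cardinal.aleph0_le_aleph 1)
  set k : ℕ → Omega1 := fun n => ⟨(g n : Ordinal), hnat (g n)⟩ with hk
  -- k agrees with each gfam α only finitely often
  have hall : ∀ α : Omega1, {n : ℕ | k n = gfam α n}.Finite := by
    intro α
    refine Set.Finite.subset (hg (f α) ⟨α, rfl⟩) ?_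
    intro n hn
    simp only [Set.mem_setOf_eq] at hn ⊢
    have h1 : (gfam α n).1 = ((g n : ℕ) : Ordinal) := by
      rw [← hn]
    have hex : ∃ m : ℕ, (gfam α n).1 = (m : Ordinal) := ⟨g n, h1⟩
    have h2 : f α n = g n := by
      have hch : ((hex.choose : ℕ) : Ordinal) = ((g n : ℕ) : Ordinal) := by
        rw [← hex.choose_spec, h1]
      have hch' : hex.choose = g n := by exact_mod_cast hch
      rw [hf]
      simp only [hex, dif_pos]
      exact hch'
    rw [h2]
    exact lt_irrefl _
  -- so the "bad" set is everything, contradicting countability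
  have := hfam k
  have huniv : {α : Omega1 | {n : ℕ | k n = gfam α n}.Finite} = Set.univ := by
    ext α; simp [hall α]
  rw [huniv, Set.countable_univ_iff] at this
  have hcard : #Omega1 ≤ Cardinal.aleph0 := Cardinal.mk_le_aleph0
  rw [hmk, ← Cardinal.lift_aleph0.{1,0}] at hcard
  exact absurd (Cardinal.lift_le.mp hcard) (not_le.2 Cardinal.aleph0_lt_aleph_one)
end

section
/- Suppose there exists an (S**)-family (h_α : ℕ → ω₁)_{α<ω₁}. Then there exists a family (X_α : α < ω₁) of infinite subsets of ℕ such that for every infinite Y ⊆ ℕ, for all but countably many α < ω₁, there are infinitely many x ∈ X_α such that |Y ∩ [x, x⁺)| ≥ 2, where x⁺ denotes the least element of X_α greater than x. -/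
open Cardinal Set

namespace SstarAux

lemma nat_lt_ord (N : ℕ) : (N : Ordinal.{0}) < (Cardinal.aleph 1).ord := by
  refine lt_of_lt_of_le (Ordinal.nat_lt_omega0 N) ?_
  rw [← Cardinal.ord_aleph0]
  exact Cardinal.ord_le_ord.mpr (by simpa using Cardinal.aleph_le_aleph.mpr zero_le_one)

noncomputable def enc (N : ℕ) : Omega1 := ⟨(N : Ordinal), nat_lt_ord N⟩

lemma enc_inj : Function.Injective enc := by
  intro a b hab
  have : (a : Ordinal) = b := congrArg Subtype.val hab
  exact_mod_cast this

open Classical in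
noncomputable def g (f : ℕ → Omega1) (n : ℕ) : ℕ :=
  if h : ∃ N : ℕ, f n = enc N then h.choose else 0

lemma g_eq {f : ℕ → Omega1} {n N : ℕ} (h : f n = enc N) : g f n = N := by
  classical
  have he : ∃ M : ℕ, f n = enc M := ⟨N, h⟩
  unfold g
  rw [dif_pos he]
  exact enc_inj (he.choose_spec.symm.trans h)

noncomputable def xs (f : ℕ → Omega1) : ℕ → ℕ
  | 0 => 0
  | m + 1 => xs f m + 1 + (Finset.range (xs f m + 1)).sup (g f)

lemma xs_lt_succ (f : ℕ → Omega1) (m : ℕ) : xs f m < xs f (m + 1) := by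
  simp [xs]; omega

lemma xs_strictMono (f : ℕ → Omega1) : StrictMono (xs f) :=
  strictMono_nat_of_lt_succ (xs_lt_succ f)

lemma le_xs (f : ℕ → Omega1) (m : ℕ) : m ≤ xs f m := by
  induction m with
  | zero => simp [xs]
  | succ m ih => have := xs_lt_succ f m; omega

lemma g_lt {f : ℕ → Omega1} {n m : ℕ} (h : n ≤ xs f m) : g f n < xs f (m + 1) := by
  have : g f n ≤ (Finset.range (xs f m + 1)).sup (g f) :=
    Finset.le_sup (Finset.mem_range.mpr (by omega))
  simp only [xs]; omega

lemma sInf_next (f : ℕ → Omega1) (m : ℕ) :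
    sInf {y ∈ Set.range (xs f) | xs f m < y} = xs f (m + 1) := by
  have hmem : xs f (m + 1) ∈ {y ∈ Set.range (xs f) | xs f m < y} :=
    ⟨⟨m + 1, rfl⟩, xs_lt_succ f m⟩
  refine le_antisymm (Nat.sInf_le hmem) ?_
  have hne : {y ∈ Set.range (xs f) | xs f m < y}.Nonempty := ⟨_, hmem⟩
  obtain ⟨⟨j, hj⟩, hlt⟩ := Nat.sInf_mem hne
  have : m < j := by
    by_contra hc
    exact absurd (hj ▸ (xs_strictMono f).monotone (not_lt.mp hc)) (not_le.mpr hlt)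
  calc xs f (m + 1) ≤ xs f j := (xs_strictMono f).monotone this
    _ = _ := hj

lemma exists_index (f : ℕ → Omega1) (n : ℕ) :
    ∃ m, xs f m ≤ n ∧ n < xs f (m + 1) := by
  have hP : n < xs f (n + 1) := lt_of_lt_of_le (Nat.lt_succ_self n) (le_xs f (n + 1))
  have hex : ∃ j, n < xs f j := ⟨n + 1, hP⟩
  have hfind := Nat.find_spec hex
  have hj0 : Nat.find hex ≠ 0 := by
    intro h0
    rw [h0] at hfind
    simp [xs] at hfind
  refine ⟨Nat.find hex - 1, not_lt.mp (Nat.find_min hex (by omega)), ?_⟩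
  have heq : Nat.find hex - 1 + 1 = Nat.find hex := by omega
  rw [heq]
  exact hfind

end SstarAux

open SstarAux in
/-- An (S**)-family yields (X_α : α < ω₁), infinite subsets of ℕ, such that for
every infinite Y ⊆ ℕ, for all but countably many α there are infinitely many
x ∈ X_α with |Y ∩ [x, x⁺)| ≥ 2, where x⁺ = min {y ∈ X_α | x < y}. -/
theorem Sstar2_implies_interval_family
    (h : ∃ hfam : Omega1 → ℕ → Omega1,
      ∀ X : Set ℕ, X.Infinite → ∀ k : ℕ → Omega1,
        {α : Omega1 | {n ∈ X | k n = hfam α n}.Finite}.Countable) :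
    ∃ Xf : Omega1 → Set ℕ,
      (∀ α : Omega1, (Xf α).Infinite) ∧
      ∀ Y : Set ℕ, Y.Infinite →
        {α : Omega1 |
          {x ∈ Xf α | 2 ≤ (Y ∩ Set.Ico x (sInf {y ∈ Xf α | x < y})).ncard}.Finite
            }.Countable := by
  obtain ⟨hfam, hS⟩ := h
  refine ⟨fun α => Set.range (xs (hfam α)), fun α =>
    Set.infinite_range_of_injective (xs_strictMono (hfam α)).injective, ?_⟩
  intro Y hY
  -- the "next element of Y" function
  have hne : ∀ n : ℕ, {y ∈ Y | n < y}.Nonempty := by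
    intro n
    obtain ⟨b, hb, hnb⟩ := hY.exists_gt n
    exact ⟨b, hb, hnb⟩
  set nxt : ℕ → ℕ := fun n => sInf {y ∈ Y | n < y} with hnxt
  have hnxt_mem : ∀ n, nxt n ∈ Y ∧ n < nxt n := fun n => Nat.sInf_mem (hne n)
  set k : ℕ → Omega1 := fun n => enc (nxt (nxt (nxt n))) with hk
  refine (hS Set.univ Set.infinite_univ k).mono ?_
  intro α hα
  simp only [Set.mem_setOf_eq] at hα ⊢
  set f := hfam α with hf
  by_contra hg
  rw [← Set.not_infinite, not_not] at hg
  -- from infinitely many correct guesses, the good set is unbounded, hence infinite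
  obtain ⟨B, hB⟩ := hα.bddAbove
  -- find a correct guess n beyond xs f (B+1)
  obtain ⟨n, hn, hnB⟩ := hg.exists_gt (xs f (B + 1))
  obtain ⟨-, hkn⟩ := hn
  obtain ⟨m, hm1, hm2⟩ := exists_index f n
  have hBm : B + 1 ≤ m := by
    by_contra hc
    have : xs f (m + 1) ≤ xs f (B + 1) := (xs_strictMono f).monotone (by omega)
    omega
  -- the three next elements of Y
  set a := nxt n with ha
  set b := nxt a with hb2
  set c := nxt b with hc2
  have haY := hnxt_mem n
  have hbY := hnxt_mem a
  have hcY := hnxt_mem b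
  have hgfn : g f n = c := g_eq hkn.symm
  have hclt : c < xs f (m + 2) := hgfn ▸ g_lt (f := f) (n := n) (m := m + 1) (le_of_lt hm2)
  -- pigeonhole: two of a < b < c lie in one of the two consecutive intervals
  have key : ∃ x ∈ Set.range (xs f), B < x ∧
      2 ≤ (Y ∩ Set.Ico x (sInf {y ∈ Set.range (xs f) | x < y})).ncard := by
    rcases lt_or_ge b (xs f (m + 1)) with hcase | hcase
    · refine ⟨xs f m, ⟨m, rfl⟩, by have := le_xs f m; omega, ?_⟩
      rw [sInf_next]
      have hsub : {a, b} ⊆ Y ∩ Set.Ico (xs f m) (xs f (m + 1)) := by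
        intro z hz
        rcases hz with rfl | hz
        · exact ⟨haY.1, by omega, by omega⟩
        · rw [Set.mem_singleton_iff] at hz
          subst hz
          exact ⟨hbY.1, by omega, hcase⟩
      calc 2 = ({a, b} : Set ℕ).ncard := (Set.ncard_pair (by omega)).symm
        _ ≤ _ := Set.ncard_le_ncard hsub ((Set.finite_Ico _ _).inter_of_right Y)
    · refine ⟨xs f (m + 1), ⟨m + 1, rfl⟩, by have := le_xs f (m + 1); omega, ?_⟩
      rw [sInf_next]
      have hsub : {b, c} ⊆ Y ∩ Set.Ico (xs f (m + 1)) (xs f (m + 2)) := by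
        intro z hz
        rcases hz with rfl | hz
        · exact ⟨hbY.1, hcase, by omega⟩
        · rw [Set.mem_singleton_iff] at hz
          subst hz
          exact ⟨hcY.1, by omega, hclt⟩
      calc 2 = ({b, c} : Set ℕ).ncard := (Set.ncard_pair (by omega)).symm
        _ ≤ _ := Set.ncard_le_ncard hsub ((Set.finite_Ico _ _).inter_of_right Y)
  obtain ⟨x, hx1, hx2, hx3⟩ := key
  exact absurd (hB ⟨hx1, hx3⟩) (by omega)
end
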